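/- arXiv:1208.4578 — 2 statements merged into one kernel-verified Lean document; each statement's English description precedes it below -/
import Mathlib

section
/- Let g : ℝ → ℝ be a continuous function of rapid decay (i.e., for every k, x^k g(x) is bounded) such that all moments vanish: ∫ g(x) x^k dx = 0 for all k ∈ ℕ. If the support of g is not compact, then the set of zeros {x : g(x) = 0} is unbounded. -/
open MeasureTheory Filter Topology

noncomputable def ft (f : ℝ → ℂ) (ω : ℝ) : ℂ :=
  ∫ x : ℝ, Complex.exp (-(Complex.I * ω * x)) * f x

def IsSignatureWavelet (κ : SchwartzMap ℝ ℂ) : Prop :=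
  κ ≠ 0 ∧
  (∃ c d : ℝ, 0 < c ∧ c < d ∧ ∀ ω : ℝ, ft (⇑κ) ω ≠ 0 → ω ∈ Set.Icc c d) ∧
  (∀ ω : ℝ, (ft (⇑κ) ω).im = 0 ∧ 0 ≤ (ft (⇑κ) ω).re)

noncomputable def csgn (z : ℂ) : ℂ := if z = 0 then 0 else z / (‖z‖ : ℂ)

noncomputable def wcoeff (f : ℝ → ℂ) (κ : SchwartzMap ℝ ℂ) (a b : ℝ) : ℂ :=
  (Real.sqrt a : ℂ)⁻¹ * ∫ x : ℝ, f x * κ ((x - b) / a)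

open Classical in
noncomputable def signature (f : ℝ → ℂ) (b : ℝ) : ℂ :=
  if h : ∃ z : ℂ, ∀ κ : SchwartzMap ℝ ℂ, IsSignatureWavelet κ →
      Filter.Tendsto (fun a => csgn (wcoeff f κ a b)) (𝓝[>] (0:ℝ)) (𝓝 z)
  then h.choose else 0

/-!
If the zeros of `g` lie in `[-S, S]`, then `g` has constant sign on each of the two half-lines
`|x| ≥ S`, so `g · p > 0` there for some polynomial `p` of degree at most one. Multiplying `p` by
`u ^ m` with `u x = x² / S² - 1`, which is bounded by `1` on `[-S, S]`, nonnegative outside and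
at least `3` on `[2S, 3S]`, makes the integral of `g · p · u ^ m` positive for large `m`,
contradicting the vanishing of the moments.
-/

open Polynomial Set

theorem IsPreconnected.forall_pos_or_forall_neg {X : Type*} [TopologicalSpace X] {s : Set X}
    (hs : IsPreconnected s) {f : X → ℝ} (hf : ContinuousOn f s) (h0 : ∀ x ∈ s, f x ≠ 0) :
    (∀ x ∈ s, 0 < f x) ∨ ∀ x ∈ s, f x < 0 := by
  by_contra! h
  obtain ⟨⟨a, ha, hfa⟩, b, hb, hfb⟩ := h
  obtain ⟨x, hx, hfx⟩ := hs.intermediate_value₂ ha hb hf continuousOn_const hfa hfb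
  exact h0 x hx hfx

theorem integrable_indicator_Icc_const (a b c : ℝ) :
    Integrable ((Icc a b).indicator fun _ => c) :=
  (integrable_indicator_iff measurableSet_Icc).2 (integrableOn_const measure_Icc_lt_top.ne)

section

variable {g : ℝ → ℝ} {μ : Measure ℝ} {S : ℝ}

theorem integrable_mul_pow_of_decay [μ.HasTemperateGrowth] (hg : AEStronglyMeasurable g μ)
    (hdecay : ∀ k : ℕ, ∃ C : ℝ, ∀ x : ℝ, |x| ^ k * |g x| ≤ C) (k : ℕ) :
    Integrable (fun x => g x * x ^ k) μ := by
  obtain ⟨C₁, hC₁⟩ := hdecay 0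
  obtain ⟨C₂, hC₂⟩ := hdecay (k + μ.integrablePower)
  have hnorm : Integrable (fun x => ‖x‖ ^ k * ‖g x‖) μ :=
    integrable_of_le_of_pow_mul_le (fun x => by simpa using hC₁ x) hC₂ hg
  refine hnorm.mono' (hg.mul (continuous_pow k).aestronglyMeasurable) (ae_of_all _ fun x => ?_)
  rw [norm_mul, norm_pow, mul_comm]

theorem integrable_mul_eval (hint : ∀ k : ℕ, Integrable (fun x => g x * x ^ k) μ) (p : ℝ[X]) :
    Integrable (fun x => g x * p.eval x) μ := by
  simp_rw [eval_eq_sum_range, Finset.mul_sum, mul_left_comm (g _)]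
  exact integrable_finsetSum _ fun i _ => (hint i).const_mul (p.coeff i)

theorem integral_mul_eval_eq_zero (hint : ∀ k : ℕ, Integrable (fun x => g x * x ^ k) μ)
    (hmom : ∀ k : ℕ, ∫ x, g x * x ^ k ∂μ = 0) (p : ℝ[X]) :
    ∫ x, g x * p.eval x ∂μ = 0 := by
  simp_rw [eval_eq_sum_range, Finset.mul_sum, mul_left_comm (g _)]
  rw [integral_finsetSum _ fun i _ => (hint i).const_mul (p.coeff i)]
  simp [integral_const_mul, hmom]

theorem exists_polynomial_mul_pos_of_ne_zero (hg : Continuous g) (hS : 0 < S)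
    (h0 : ∀ x, S ≤ |x| → g x ≠ 0) : ∃ p : ℝ[X], ∀ x, S ≤ |x| → 0 < g x * p.eval x := by
  have hright := isPreconnected_Ici.forall_pos_or_forall_neg hg.continuousOn
    fun x (hx : S ≤ x) => h0 x (hx.trans (le_abs_self x))
  have hleft := isPreconnected_Iic.forall_pos_or_forall_neg hg.continuousOn
    fun x (hx : x ≤ -S) => h0 x ((le_neg.1 hx).trans (neg_le_abs x))
  suffices ∃ p : ℝ[X], (∀ x, S ≤ x → 0 < g x * p.eval x) ∧ ∀ x, x ≤ -S → 0 < g x * p.eval x by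
    obtain ⟨p, hpr, hpl⟩ := this
    refine ⟨p, fun x hx => (le_abs'.1 hx).elim (fun h => hpl x (by linarith)) (hpr x)⟩
  rcases hright with hr | hr <;> rcases hleft with hl | hl
  · exact ⟨1, fun x hx => by simpa using hr x hx, fun x hx => by simpa using hl x hx⟩
  · exact ⟨X, fun x hx => mul_pos (hr x hx) (by simp; linarith),
      fun x hx => mul_pos_of_neg_of_neg (hl x hx) (by simp; linarith)⟩
  · exact ⟨-X, fun x hx => mul_pos_of_neg_of_neg (hr x hx) (by simp; linarith),
      fun x hx => mul_pos (hl x hx) (by simp; linarith)⟩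
  · exact ⟨-1, fun x hx => by simpa using hr x hx, fun x hx => by simpa using hl x hx⟩

theorem indicator_sub_indicator_le_mul_pow {h : ℝ → ℝ} {ε B : ℝ} (hS : 0 < S)
    (hpos : ∀ x, S ≤ |x| → 0 ≤ h x) (hε : ∀ x ∈ Icc (2 * S) (3 * S), ε ≤ h x)
    (hB : ∀ x ∈ Icc (-S) S, |h x| ≤ B) (m : ℕ) (x : ℝ) :
    (Icc (2 * S) (3 * S)).indicator (fun _ => ε * 3 ^ m) x - (Icc (-S) S).indicator (fun _ => B) x
      ≤ h x * ((S ^ 2)⁻¹ * x ^ 2 - 1) ^ m := by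
  have hS2 : 0 < S ^ 2 := by positivity
  by_cases hx : |x| ≤ S
  · have hxI : x ∈ Icc (-S) S := abs_le.1 hx
    have hxJ : x ∉ Icc (2 * S) (3 * S) := fun hJ => by linarith [hJ.1, hxI.2]
    have hu : |(S ^ 2)⁻¹ * x ^ 2 - 1| ≤ 1 := by
      have h0 : 0 ≤ (S ^ 2)⁻¹ * x ^ 2 := by positivity
      have h1 : (S ^ 2)⁻¹ * x ^ 2 ≤ 1 := (inv_mul_le_one₀ hS2).2 (sq_le_sq' hxI.1 hxI.2)
      rw [abs_le]
      constructor <;> linarith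
    rw [indicator_of_notMem hxJ, indicator_of_mem hxI, zero_sub, neg_le]
    calc -(h x * ((S ^ 2)⁻¹ * x ^ 2 - 1) ^ m) ≤ |h x * ((S ^ 2)⁻¹ * x ^ 2 - 1) ^ m| :=
          neg_le_abs _
      _ ≤ B := by
          rw [abs_mul, abs_pow]
          exact (mul_le_of_le_one_right (abs_nonneg _) (pow_le_one₀ (abs_nonneg _) hu)).trans
            (hB x hxI)
  · push Not at hx
    have hxI : x ∉ Icc (-S) S := fun hI => hx.not_ge (abs_le.2 hI)
    have hx2 : S ^ 2 ≤ x ^ 2 := by simpa using pow_le_pow_left₀ hS.le hx.le 2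
    have hu : 0 ≤ (S ^ 2)⁻¹ * x ^ 2 - 1 := sub_nonneg.2 ((one_le_inv_mul₀ hS2).2 hx2)
    rw [indicator_of_notMem hxI, sub_zero]
    by_cases hxJ : x ∈ Icc (2 * S) (3 * S)
    · have hu3 : 3 ≤ (S ^ 2)⁻¹ * x ^ 2 - 1 := by
        rw [le_sub_iff_add_le, le_inv_mul_iff₀ hS2]
        nlinarith [hxJ.1]
      rw [indicator_of_mem hxJ]
      exact mul_le_mul (hε x hxJ) (pow_le_pow_left₀ (by norm_num) hu3 m) (by positivity)
        (hpos x hx.le)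
    · rw [indicator_of_notMem hxJ]
      exact mul_nonneg (hpos x hx.le) (pow_nonneg hu m)

theorem integral_indicator_Icc_sub_indicator_Icc (hS : 0 < S) (c B : ℝ) :
    ∫ x, (Icc (2 * S) (3 * S)).indicator (fun _ => c) x - (Icc (-S) S).indicator (fun _ => B) x
      = S * (c - 2 * B) := by
  rw [integral_sub (integrable_indicator_Icc_const _ _ _) (integrable_indicator_Icc_const _ _ _),
    integral_indicator_const _ measurableSet_Icc, integral_indicator_const _ measurableSet_Icc,
    Real.volume_real_Icc_of_le (by linarith), Real.volume_real_Icc_of_le (by linarith),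
    smul_eq_mul, smul_eq_mul]
  ring

theorem exists_integral_mul_eval_pos (hg : Continuous g)
    (hint : ∀ q : ℝ[X], Integrable (fun x => g x * q.eval x)) (hS : 0 < S) {p : ℝ[X]}
    (hp : ∀ x, S ≤ |x| → 0 < g x * p.eval x) : ∃ q : ℝ[X], 0 < ∫ x, g x * q.eval x := by
  have hcont : Continuous fun x => g x * p.eval x := hg.mul p.continuous
  obtain ⟨x₀, hx₀, hmin⟩ := isCompact_Icc.exists_isMinOn
    (nonempty_Icc.2 (by linarith : 2 * S ≤ 3 * S)) hcont.continuousOn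
  have hε : 0 < g x₀ * p.eval x₀ :=
    hp x₀ (by rw [abs_of_pos (by linarith [hx₀.1])]; linarith [hx₀.1])
  obtain ⟨B, hB⟩ := (isCompact_Icc (a := -S) (b := S)).exists_bound_of_continuousOn
    hcont.continuousOn
  obtain ⟨m, hm⟩ := pow_unbounded_of_one_lt (2 * B / (g x₀ * p.eval x₀)) (by norm_num : (1 : ℝ) < 3)
  refine ⟨p * (C (S ^ 2)⁻¹ * X ^ 2 - 1) ^ m, ?_⟩
  calc 0 < S * (g x₀ * p.eval x₀ * 3 ^ m - 2 * B) :=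
        mul_pos hS (sub_pos.2 (by rw [div_lt_iff₀ hε] at hm; linarith))
    _ = ∫ x, (Icc (2 * S) (3 * S)).indicator (fun _ => g x₀ * p.eval x₀ * 3 ^ m) x
          - (Icc (-S) S).indicator (fun _ => B) x :=
        (integral_indicator_Icc_sub_indicator_Icc hS _ _).symm
    _ ≤ _ := by
        refine integral_mono ((integrable_indicator_Icc_const _ _ _).sub
          (integrable_indicator_Icc_const _ _ _)) (hint _) fun x => ?_
        simpa [mul_assoc] using indicator_sub_indicator_le_mul_pow hS (fun x hx => (hp x hx).le)
          (fun x hx => isMinOn_iff.1 hmin x hx) hB m x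

end

theorem moments_vanish_noncompact_support_zeros_unbounded_general
    (g : ℝ → ℝ) (hcont : Continuous g)
    (hdecay : ∀ k : ℕ, ∃ C : ℝ, ∀ x : ℝ, |x| ^ k * |g x| ≤ C)
    (hmom : ∀ k : ℕ, ∫ x : ℝ, g x * x ^ k = 0) :
    ¬ Bornology.IsBounded {x : ℝ | g x = 0} := by
  intro hB
  obtain ⟨R, hR⟩ := hB.subset_closedBall 0
  have hint := integrable_mul_pow_of_decay (μ := volume) hcont.aestronglyMeasurable hdecay
  obtain ⟨p, hp⟩ := exists_polynomial_mul_pos_of_ne_zero hcont (S := max R 0 + 1) (by positivity)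
    fun x hx hgx => by
      have : |x| ≤ R := by simpa using hR hgx
      linarith [le_max_left R 0]
  obtain ⟨q, hq⟩ := exists_integral_mul_eval_pos hcont (integrable_mul_eval hint)
    (by positivity) hp
  exact hq.ne' (integral_mul_eval_eq_zero hint hmom q)

theorem moments_vanish_noncompact_support_zeros_unbounded
    (g : ℝ → ℝ) (hcont : Continuous g)
    (hdecay : ∀ k : ℕ, ∃ C : ℝ, ∀ x : ℝ, |x| ^ k * |g x| ≤ C)
    (hmom : ∀ k : ℕ, ∫ x : ℝ, g x * x ^ k = 0)
    (hsupp : ¬ IsCompact (tsupport g)) :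
    ¬ Bornology.IsBounded {x : ℝ | g x = 0} :=
  moments_vanish_noncompact_support_zeros_unbounded_general g hcont hdecay hmom
end

section
/- For 0 < γ < 2 with γ ∉ 2ℕ₀, and any signature wavelet κ, the pairing ⟨|·|^γ, κ_{a,0}⟩ is real and strictly negative for every a > 0; hence sgn⟨|·|^γ, κ_{a,0}⟩ = -1. -/
open MeasureTheory Filter Topology

/-!
For `0 < γ < 2` the substitution `u = |x| t` gives
`∫₀^∞ (1 - cos (t x)) t^(-1-γ) dt = K_γ |x|^γ` with `K_γ > 0`.
Inserting this into `∫ |x|^γ κ x dx` and swapping the integrals (Fubini), the inner integral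
`∫ (1 - cos (t x)) κ x dx = ft κ 0 - (ft κ t + ft κ (-t)) / 2` reduces to `-ft κ t / 2`, since the
spectrum of `κ` lies in `[c, d] ⊂ (0, ∞)`. Hence
`K_γ ∫ |x|^γ κ x dx = -½ ∫₀^∞ t^(-1-γ) ft κ t dt`, which is real and strictly negative because
`ft κ` is continuous, nonnegative and not identically zero. Dilating `κ` by `a` only multiplies
the pairing by `a^(γ + 1)`.
-/

open Set FourierTransform

noncomputable def cosKernel (γ x t : ℝ) : ℝ := (1 - Real.cos (t * x)) * t ^ (-1 - γ)

noncomputable def cosKernelConst (γ : ℝ) : ℝ := ∫ t in Ioi 0, cosKernel γ 1 t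

lemma cosKernel_nonneg (γ x : ℝ) {t : ℝ} (ht : 0 ≤ t) : 0 ≤ cosKernel γ x t :=
  mul_nonneg (sub_nonneg.2 (Real.cos_le_one _)) (Real.rpow_nonneg ht _)

lemma integrableOn_cosKernel {γ : ℝ} (hγ0 : 0 < γ) (hγ2 : γ < 2) (x : ℝ) :
    IntegrableOn (cosKernel γ x) (Ioi 0) := by
  have hmeas : AEStronglyMeasurable (cosKernel γ x) := by
    unfold cosKernel; fun_prop
  have near_zero : IntegrableOn (cosKernel γ x) (Ioc 0 1) := by
    have hdom : IntegrableOn (fun t : ℝ => x ^ 2 / 2 * t ^ (1 - γ)) (Ioc 0 1) := by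
      refine Integrable.const_mul ?_ _
      exact (intervalIntegrable_iff_integrableOn_Ioc_of_le zero_le_one).1
        (intervalIntegral.intervalIntegrable_rpow' (by linarith))
    refine hdom.mono' hmeas.restrict ?_
    filter_upwards [ae_restrict_mem measurableSet_Ioc] with t ht
    replace ht : 0 < t := ht.1
    rw [Real.norm_of_nonneg (cosKernel_nonneg γ x ht.le)]
    calc cosKernel γ x t ≤ (t * x) ^ 2 / 2 * t ^ (-1 - γ) := by
          unfold cosKernel
          gcongr
          linarith [Real.one_sub_sq_div_two_le_cos (x := t * x)]
      _ = x ^ 2 / 2 * t ^ (1 - γ) := by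
          rw [show (1 : ℝ) - γ = 2 + (-1 - γ) by ring, Real.rpow_add ht, Real.rpow_two]
          ring
  have near_infty : IntegrableOn (cosKernel γ x) (Ioi 1) := by
    have hdom := (integrableOn_Ioi_rpow_of_lt (show -1 - γ < -1 by linarith) one_pos).const_mul 2
    refine hdom.mono' hmeas.restrict ?_
    filter_upwards [ae_restrict_mem measurableSet_Ioi] with t ht
    have ht0 : 0 < t := one_pos.trans ht
    rw [Real.norm_of_nonneg (cosKernel_nonneg γ x ht0.le)]
    unfold cosKernel
    gcongr
    linarith [Real.neg_one_le_cos (t * x), Real.cos_le_one (t * x)]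
  simpa only [Ioc_union_Ioi_eq_Ioi zero_le_one] using near_zero.union near_infty

lemma integral_cosKernel {γ : ℝ} (hγ : γ ≠ 0) (x : ℝ) :
    ∫ t in Ioi 0, cosKernel γ x t = |x| ^ γ * cosKernelConst γ := by
  rcases eq_or_ne x 0 with rfl | hx
  · simp [cosKernel, Real.zero_rpow hγ]
  have hx' : 0 < |x| := abs_pos.2 hx
  have hscale : ∀ t ∈ Ioi (0 : ℝ),
      cosKernel γ x t = |x| ^ (1 + γ) * cosKernel γ 1 (|x| * t) := by
    intro t ht
    have hcos : Real.cos (t * x) = Real.cos (|x| * t * 1) := by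
      rcases abs_choice x with h | h <;> rw [h]
      · ring_nf
      · rw [← Real.cos_neg]; ring_nf
    rw [cosKernel, cosKernel, hcos, Real.mul_rpow hx'.le (le_of_lt ht)]
    have : |x| ^ (1 + γ) * |x| ^ (-1 - γ) = 1 := by
      rw [← Real.rpow_add hx']; norm_num
    linear_combination (1 - Real.cos (|x| * t * 1)) * t ^ (-1 - γ) * this.symm
  rw [setIntegral_congr_fun measurableSet_Ioi hscale, integral_const_mul,
    integral_comp_mul_left_Ioi (cosKernel γ 1) 0 hx', mul_zero, smul_eq_mul, ← mul_assoc,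
    ← Real.rpow_neg_one, ← Real.rpow_add hx', cosKernelConst]
  norm_num

lemma cosKernelConst_pos {γ : ℝ} (hγ0 : 0 < γ) (hγ2 : γ < 2) : 0 < cosKernelConst γ := by
  have hnonneg : 0 ≤ᵐ[volume.restrict (Ioi 0)] cosKernel γ 1 := by
    filter_upwards [ae_restrict_mem measurableSet_Ioi] with t ht
    exact cosKernel_nonneg γ 1 (le_of_lt ht)
  rw [cosKernelConst, setIntegral_pos_iff_support_of_nonneg_ae hnonneg
    (integrableOn_cosKernel hγ0 hγ2 1)]
  have hsub : Ioo (Real.pi / 2) Real.pi ⊆ Function.support (cosKernel γ 1) ∩ Ioi 0 := by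
    intro t ⟨ht1, ht2⟩
    have ht0 : 0 < t := lt_trans (by positivity) ht1
    have hcos : Real.cos (t * 1) ≤ 0 := by
      rw [mul_one]; exact Real.cos_nonpos_of_pi_div_two_le_of_le ht1.le (by linarith)
    exact ⟨(mul_pos (by linarith) (Real.rpow_pos_of_pos ht0 _)).ne', ht0⟩
  refine lt_of_lt_of_le ?_ (measure_mono hsub)
  rw [Real.volume_Ioo, ENNReal.ofReal_pos]
  linarith [Real.pi_pos]

theorem cosKernelConst_mul_integral_abs_rpow_mul {γ : ℝ} (hγ0 : 0 < γ) (hγ2 : γ < 2)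
    {g : ℝ → ℂ} (hg : AEStronglyMeasurable g)
    (hint : Integrable fun x => ((|x| ^ γ : ℝ) : ℂ) * g x) :
    (cosKernelConst γ : ℂ) * ∫ x, ((|x| ^ γ : ℝ) : ℂ) * g x
      = ∫ t in Ioi 0, ((t ^ (-1 - γ) : ℝ) : ℂ) * ∫ x, ((1 - Real.cos (t * x) : ℝ) : ℂ) * g x := by
  set F : ℝ → ℝ → ℂ := fun x t => (cosKernel γ x t : ℂ) * g x with hF
  have hF_inner : ∀ x,
      ∫ t in Ioi 0, F x t = (cosKernelConst γ : ℂ) * (((|x| ^ γ : ℝ) : ℂ) * g x) := by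
    intro x
    rw [integral_mul_const, integral_complex_ofReal, integral_cosKernel hγ0.ne']
    push_cast
    ring
  have hF_int : Integrable (Function.uncurry F) (volume.prod (volume.restrict (Ioi 0))) := by
    have hmeas : AEStronglyMeasurable (Function.uncurry F)
        (volume.prod (volume.restrict (Ioi 0))) := by
      refine AEStronglyMeasurable.mul ?_ hg.comp_fst
      exact (by unfold cosKernel; fun_prop : Measurable fun p : ℝ × ℝ =>
        (cosKernel γ p.1 p.2 : ℂ)).aestronglyMeasurable
    refine (integrable_prod_iff hmeas).2 ⟨.of_forall fun x =>
      (integrableOn_cosKernel hγ0 hγ2 x).ofReal.mul_const (g x), ?_⟩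
    refine (hint.norm.const_mul (cosKernelConst γ)).congr (.of_forall fun x => ?_)
    simp only [Function.uncurry_apply_pair]
    have hnorm : ∀ t ∈ Ioi (0 : ℝ), ‖F x t‖ = cosKernel γ x t * ‖g x‖ := fun t ht => by
      rw [norm_mul, Complex.norm_real,
        Real.norm_of_nonneg (cosKernel_nonneg γ x (le_of_lt ht))]
    rw [setIntegral_congr_fun measurableSet_Ioi hnorm, integral_mul_const,
      integral_cosKernel hγ0.ne', norm_mul, Complex.norm_real,
      Real.norm_of_nonneg (by positivity)]
    ring
  have hF_outer : ∀ t, ∫ x, F x t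
      = ((t ^ (-1 - γ) : ℝ) : ℂ) * ∫ x, ((1 - Real.cos (t * x) : ℝ) : ℂ) * g x := by
    intro t
    rw [← integral_const_mul]
    congr 1 with x
    simp only [hF, cosKernel]
    push_cast
    ring
  calc (cosKernelConst γ : ℂ) * ∫ x, ((|x| ^ γ : ℝ) : ℂ) * g x
      = ∫ x, ∫ t in Ioi 0, F x t := by simp_rw [hF_inner, integral_const_mul]
    _ = ∫ t in Ioi 0, ∫ x, F x t := integral_integral_swap hF_int
    _ = _ := by simp_rw [hF_outer]

lemma integrable_exp_mul {g : ℝ → ℂ} (hg : Integrable g) (ω : ℝ) :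
    Integrable fun x : ℝ => Complex.exp (-(Complex.I * ω * x)) * g x :=
  hg.bdd_mul (c := 1) (by fun_prop) (.of_forall fun x => by
    rw [Complex.norm_exp]; simp)

lemma integral_one_sub_cos_mul {g : ℝ → ℂ} (hg : Integrable g) (t : ℝ) :
    ∫ x, ((1 - Real.cos (t * x) : ℝ) : ℂ) * g x = ft g 0 - (ft g t + ft g (-t)) / 2 := by
  have hcos : ∀ x : ℝ, ((1 - Real.cos (t * x) : ℝ) : ℂ) * g x
      = Complex.exp (-(Complex.I * (0 : ℝ) * x)) * g x
        - (Complex.exp (-(Complex.I * t * x)) * g x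
          + Complex.exp (-(Complex.I * (-t : ℝ) * x)) * g x) / 2 := by
    intro x
    push_cast
    rw [Complex.cos]
    ring_nf
    rw [Complex.exp_zero, mul_one]
  have hsum : Integrable fun x : ℝ => Complex.exp (-(Complex.I * t * x)) * g x
      + Complex.exp (-(Complex.I * (-t : ℝ) * x)) * g x :=
    (integrable_exp_mul hg t).add (integrable_exp_mul hg (-t))
  simp_rw [hcos]
  rw [integral_sub (integrable_exp_mul hg 0) (hsum.div_const 2), integral_div,
    integral_add (integrable_exp_mul hg t) (integrable_exp_mul hg (-t))]
  rfl

lemma ft_eq_fourier (f : ℝ → ℂ) (ω : ℝ) : ft f ω = 𝓕 f (ω / (2 * Real.pi)) := by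
  rw [Real.fourier_real_eq, ft]
  congr 1 with x
  rw [Circle.smul_def, Real.fourierChar_apply, smul_eq_mul]
  congr 2
  field_simp
  push_cast
  ring

lemma SchwartzMap.continuous_ft (f : SchwartzMap ℝ ℂ) : Continuous (ft f) := by
  simp_rw [funext (ft_eq_fourier f), ← SchwartzMap.fourier_coe]
  fun_prop

lemma SchwartzMap.eq_zero_of_ft_eq_zero {f : SchwartzMap ℝ ℂ} (h : ∀ ω, ft f ω = 0) :
    f = 0 := by
  have hf : 𝓕 f = 0 := by
    ext ξ
    have := ft_eq_fourier f (2 * Real.pi * ξ)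
    rwa [h, mul_div_cancel_left₀ ξ (by positivity), eq_comm] at this
  simpa using congrArg 𝓕⁻ hf

lemma integral_Ioi_rpow_mul_pos {φ : ℝ → ℝ} {c d t₀ : ℝ} (hc : 0 < c) (hφ : Continuous φ)
    (hφ_nonneg : 0 ≤ φ) (hφ_supp : Function.support φ ⊆ Icc c d) (ht₀ : φ t₀ ≠ 0) (s : ℝ) :
    0 < ∫ t in Ioi 0, t ^ s * φ t := by
  have hφ_zero : ∀ t, t < c → φ t = 0 := fun t ht =>
    Function.notMem_support.1 fun h => (hφ_supp h).1.not_gt ht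
  have hsupp : Function.support (fun t => t ^ s * φ t) ⊆ Icc c d :=
    (Function.support_mul_subset_right _ _).trans hφ_supp
  have hcont : Continuous fun t => t ^ s * φ t := by
    refine continuous_iff_continuousAt.2 fun t => ?_
    rcases lt_or_ge t c with ht | ht
    · refine (continuousAt_const (y := (0 : ℝ))).congr
        (eventually_of_mem (Iio_mem_nhds ht) fun u hu => ?_)
      simp [hφ_zero u hu]
    · exact (Real.continuousAt_rpow_const _ _ (.inl (hc.trans_le ht).ne')).mul hφ.continuousAt
  rw [setIntegral_eq_integral_of_forall_compl_eq_zero (s := Ioi 0) fun t ht =>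
    Function.notMem_support.1 fun h => ht (hc.trans_le (hsupp h).1)]
  refine hcont.integral_pos_of_hasCompactSupport_nonneg_nonzero
    (.intro isCompact_Icc fun t ht => Function.notMem_support.1 fun h => ht (hsupp h))
    (fun t => ?_) (x := t₀) (mul_ne_zero ?_ ht₀)
  · by_cases h : φ t = 0
    · simp [h]
    · exact mul_nonneg (Real.rpow_nonneg (hc.trans_le (hφ_supp h).1).le _) (hφ_nonneg t)
  · exact (Real.rpow_pos_of_pos (hc.trans_le (hφ_supp ht₀).1) _).ne'

lemma abs_rpow_le_one_add_pow_ceil {γ : ℝ} (hγ : 0 ≤ γ) (x : ℝ) :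
    |x| ^ γ ≤ 1 + |x| ^ ⌈γ⌉₊ := by
  rcases le_total |x| 1 with hx | hx
  · linarith [Real.rpow_le_one (abs_nonneg x) hx hγ, pow_nonneg (abs_nonneg x) ⌈γ⌉₊]
  · rw [← Real.rpow_natCast]
    linarith [Real.rpow_le_rpow_of_exponent_le hx (Nat.le_ceil γ)]

lemma SchwartzMap.integrable_abs_rpow_mul (f : SchwartzMap ℝ ℂ) {γ : ℝ} (hγ : 0 ≤ γ) :
    Integrable fun x => ((|x| ^ γ : ℝ) : ℂ) * f x := by
  refine (f.integrable.norm.add (f.integrable_pow_mul volume ⌈γ⌉₊)).mono' ?_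
    (.of_forall fun x => ?_)
  · have : Continuous fun x : ℝ => |x| ^ γ :=
      (Real.continuous_rpow_const hγ).comp continuous_abs
    exact ((Complex.continuous_ofReal.comp this).mul f.continuous).aestronglyMeasurable
  · rw [norm_mul, Complex.norm_real, Real.norm_of_nonneg (by positivity)]
    simp only [Pi.add_apply, Real.norm_eq_abs]
    linarith [mul_le_mul_of_nonneg_right (abs_rpow_le_one_add_pow_ceil hγ x)
      (norm_nonneg (f x))]

lemma integral_abs_rpow_mul_comp_div (γ : ℝ) (f : ℝ → ℂ) {a : ℝ} (ha : 0 < a) :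
    ∫ x, ((|x| ^ γ : ℝ) : ℂ) * f (x / a)
      = ((a ^ (γ + 1) : ℝ) : ℂ) * ∫ x, ((|x| ^ γ : ℝ) : ℂ) * f x := by
  have hscale : ∀ x, ((|x| ^ γ : ℝ) : ℂ) * f (x / a)
      = (fun y => ((a ^ γ : ℝ) : ℂ) * (((|y| ^ γ : ℝ) : ℂ) * f y)) (x / a) := by
    intro x
    dsimp only
    rw [← mul_assoc, ← Complex.ofReal_mul, ← Real.mul_rpow ha.le (abs_nonneg _), abs_div,
      abs_of_pos ha, mul_div_cancel₀ _ ha.ne']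
  rw [integral_congr_ae (.of_forall hscale), Measure.integral_comp_div
    (fun y => ((a ^ γ : ℝ) : ℂ) * (((|y| ^ γ : ℝ) : ℂ) * f y)), integral_const_mul,
    abs_of_pos ha, Complex.real_smul, ← mul_assoc, ← Complex.ofReal_mul,
    Real.rpow_add_one ha.ne', mul_comm a]

lemma IsSignatureWavelet.ft_eq_zero_of_nonpos {κ : SchwartzMap ℝ ℂ} (hκ : IsSignatureWavelet κ)
    {ω : ℝ} (hω : ω ≤ 0) : ft κ ω = 0 := by
  obtain ⟨-, ⟨c, d, hc, -, hsupp⟩, -⟩ := hκ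
  by_contra h
  linarith [(hsupp ω h).1]

lemma IsSignatureWavelet.ofReal_re_ft {κ : SchwartzMap ℝ ℂ} (hκ : IsSignatureWavelet κ)
    (ω : ℝ) : (((ft κ ω).re : ℝ) : ℂ) = ft κ ω :=
  Complex.ext rfl (by simp [(hκ.2.2 ω).1])

lemma IsSignatureWavelet.integral_Ioi_rpow_mul_re_ft_pos {κ : SchwartzMap ℝ ℂ}
    (hκ : IsSignatureWavelet κ) (s : ℝ) : 0 < ∫ t in Ioi 0, t ^ s * (ft κ t).re := by
  obtain ⟨hκ0, ⟨c, d, hc, -, hsupp⟩, hreal⟩ := hκ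
  have hsupp_re : Function.support (fun t => (ft κ t).re) ⊆ Icc c d := fun t ht =>
    hsupp t fun h => ht (by simp [h])
  obtain ⟨t₀, ht₀⟩ : ∃ t₀, (ft κ t₀).re ≠ 0 := by
    by_contra! h
    exact hκ0 (κ.eq_zero_of_ft_eq_zero fun ω => Complex.ext (h ω) (hreal ω).1)
  exact integral_Ioi_rpow_mul_pos hc (Complex.continuous_re.comp κ.continuous_ft)
    (fun t => (hreal t).2) hsupp_re ht₀ s

theorem IsSignatureWavelet.integral_abs_rpow_mul {κ : SchwartzMap ℝ ℂ}
    (hκ : IsSignatureWavelet κ) {γ : ℝ} (hγ0 : 0 < γ) (hγ2 : γ < 2) :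
    ∫ x, ((|x| ^ γ : ℝ) : ℂ) * κ x
      = ((-(∫ t in Ioi 0, t ^ (-1 - γ) * (ft κ t).re) / (2 * cosKernelConst γ) : ℝ) : ℂ) := by
  have hK : (cosKernelConst γ : ℂ) ≠ 0 :=
    Complex.ofReal_ne_zero.2 (cosKernelConst_pos hγ0 hγ2).ne'
  have hinner : ∀ t ∈ Ioi (0 : ℝ),
      ((t ^ (-1 - γ) : ℝ) : ℂ) * ∫ x, ((1 - Real.cos (t * x) : ℝ) : ℂ) * κ x
        = ((-(t ^ (-1 - γ) * (ft κ t).re) / 2 : ℝ) : ℂ) := by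
    intro t ht
    rw [integral_one_sub_cos_mul κ.integrable, hκ.ft_eq_zero_of_nonpos le_rfl,
      hκ.ft_eq_zero_of_nonpos (neg_nonpos.2 (le_of_lt ht))]
    conv_lhs => rw [← hκ.ofReal_re_ft]
    push_cast
    ring
  have key := cosKernelConst_mul_integral_abs_rpow_mul hγ0 hγ2
    κ.continuous.aestronglyMeasurable (κ.integrable_abs_rpow_mul hγ0.le)
  rw [setIntegral_congr_fun measurableSet_Ioi hinner, integral_complex_ofReal, integral_div,
    integral_neg] at key
  rw [← mul_right_inj' hK, key]
  push_cast
  field_simp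

lemma csgn_ofReal_of_neg {r : ℝ} (hr : r < 0) : csgn r = -1 := by
  have hr' : (r : ℂ) ≠ 0 := Complex.ofReal_ne_zero.2 hr.ne
  rw [csgn, if_neg hr', Complex.norm_real, Real.norm_of_nonpos hr.le, Complex.ofReal_neg, div_neg,
    div_self hr']

theorem signature_of_cusp
    (γ : ℝ) (hγ0 : 0 < γ) (hγ2 : γ < 2)
    (κ : SchwartzMap ℝ ℂ) (hκ : IsSignatureWavelet κ) (a : ℝ) (ha : 0 < a) :
    (wcoeff (fun x => ((|x| ^ γ : ℝ) : ℂ)) κ a 0).im = 0 ∧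
    (wcoeff (fun x => ((|x| ^ γ : ℝ) : ℂ)) κ a 0).re < 0 ∧
    csgn (wcoeff (fun x => ((|x| ^ γ : ℝ) : ℂ)) κ a 0) = -1 := by
  obtain ⟨r, hr, hpairing⟩ : ∃ r : ℝ, r < 0 ∧ ∫ x, ((|x| ^ γ : ℝ) : ℂ) * κ x = r :=
    ⟨_, div_neg_of_neg_of_pos (neg_neg_of_pos (hκ.integral_Ioi_rpow_mul_re_ft_pos _))
      (by linarith [cosKernelConst_pos hγ0 hγ2]), hκ.integral_abs_rpow_mul hγ0 hγ2⟩
  have hw : wcoeff (fun x => ((|x| ^ γ : ℝ) : ℂ)) κ a 0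
      = ((Real.sqrt a)⁻¹ * a ^ (γ + 1) * r : ℝ) := by
    simp only [wcoeff, sub_zero]
    rw [integral_abs_rpow_mul_comp_div γ κ ha, hpairing]
    push_cast
    ring
  have hneg : (Real.sqrt a)⁻¹ * a ^ (γ + 1) * r < 0 := mul_neg_of_pos_of_neg (by positivity) hr
  rw [hw, Complex.ofReal_im, Complex.ofReal_re]
  exact ⟨rfl, hneg, csgn_ofReal_of_neg hneg⟩
end
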